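/- arXiv:2511.08304 — 2 statements merged into one kernel-verified Lean document; each statement's English description precedes it below -/
import Mathlib

section
/- Let X = A_1 × ⋯ × A_m be a Cartesian set over F_q, let 0 ≤ d ≤ m, let 1 ≤ r ≤ Σ_{i=0}^{d} C(m,i), and let M = {x^{α_1},…,x^{α_r}} be a set of r distinct square-free monomials with α_1,…,α_r ∈ S_{≤d}(m). Then there exist polynomials f_1,…,f_r in the F_q-linear span of the square-free monomials {x^α : α ∈ S_{≤d}(m)} such that the leading monomial of f_i with respect to the degree-lexicographic monomial order (with x_1 ≺ x_2 ≺ ⋯ ≺ x_m) is x^{α_i} for each 1 ≤ i ≤ r, and the number of points P ∈ X at which f_1,…,f_r all vanish equals |Δ_X({α_1,…,α_r})|. -/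
/-- Square-free exponent vectors of total degree `d` in `m` variables. -/
def Sd (m d : ℕ) : Set (Fin m → ℕ) := {a | (∀ i, a i ≤ 1) ∧ ∑ i, a i = d}

/-- Square-free exponent vectors of total degree at most `d` in `m` variables. -/
def Sle (m d : ℕ) : Set (Fin m → ℕ) := {a | (∀ i, a i ≤ 1) ∧ ∑ i, a i ≤ d}

/-- Evaluation code over the Cartesian set `X = A 0 × ⋯ × A (m-1)`, spanned by the
evaluations of the monomials `x^a` for `a ∈ S`. -/
noncomputable def evalCodeX {F : Type*} [Field F] {m : ℕ} (A : Fin m → Finset F)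
    (S : Set (Fin m → ℕ)) :
    Submodule F ({P : Fin m → F // ∀ i, P i ∈ A i} → F) :=
  Submodule.span F ((fun (a : Fin m → ℕ) (P : {P : Fin m → F // ∀ i, P i ∈ A i}) =>
    ∏ i, P.1 i ^ a i) '' S)

open Classical in
/-- Support of a linear code. -/
noncomputable def codeSupp {F ι : Type*} [Field F] [Fintype ι]
    (C : Submodule F (ι → F)) : Finset ι :=
  Finset.univ.filter (fun i => ∃ c ∈ C, c i ≠ 0)

/-- The `r`-th generalized Hamming weight of a linear code: the minimum cardinality of the
support of an `r`-dimensional subcode. -/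
noncomputable def GHW {F ι : Type*} [Field F] [Fintype ι]
    (C : Submodule F (ι → F)) (r : ℕ) : ℕ :=
  sInf {k | ∃ C' : Submodule F (ι → F),
    C' ≤ C ∧ Module.finrank F C' = r ∧ (codeSupp C').card = k}

/-- The footprint box `B_X = {0,…,n_1−1} × ⋯ × {0,…,n_m−1}`. -/
noncomputable def BX {F : Type*} {m : ℕ} (A : Fin m → Finset F) : Finset (Fin m → ℕ) :=
  Fintype.piFinset (fun i => Finset.range (A i).card)

open Classical in
/-- The shadow `∇_X(N)`: elements of `B_X` divisible by some element of `N`. -/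
noncomputable def nablaX {F : Type*} {m : ℕ} (A : Fin m → Finset F)
    (N : Set (Fin m → ℕ)) : Finset (Fin m → ℕ) :=
  (BX A).filter (fun b => ∃ a ∈ N, ∀ i, a i ≤ b i)

open Classical in
/-- The footprint `Δ_X(N) = B_X ∖ ∇_X(N)`. -/
noncomputable def deltaX {F : Type*} {m : ℕ} (A : Fin m → Finset F)
    (N : Set (Fin m → ℕ)) : Finset (Fin m → ℕ) :=
  (BX A).filter (fun b => ¬ ∃ a ∈ N, ∀ i, a i ≤ b i)

/-- The degree-lexicographic order on exponent vectors: `a` is smaller than `b` if it has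
smaller total degree, or equal total degree and `a i < b i` at the first index `i` where
they differ. -/
def degLexLt {m : ℕ} (a b : Fin m → ℕ) : Prop :=
  (∑ i, a i) < ∑ i, b i ∨
    ((∑ i, a i) = ∑ i, b i ∧ ∃ i, (∀ j, j < i → a j = b j) ∧ a i < b i)

/-- `b` is the exponent of the leading monomial of `f` with respect to the
degree-lexicographic order: `x^b` occurs in `f` and every other monomial of `f` is
smaller. -/
def IsLeadingExp {F : Type*} [Field F] {m : ℕ} (f : MvPolynomial (Fin m) F)
    (b : Fin m → ℕ) : Prop :=
  Finsupp.equivFunOnFinite.symm b ∈ f.support ∧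
    ∀ c ∈ f.support, ⇑c ≠ b → degLexLt (⇑c) b

/-!
Fix a base point `a ∈ X` and take `f_i = ∏_{j : α_i j = 1} (x_j - a_j)`. Every monomial of
`f_i` divides `x^{α_i}`, so `x^{α_i}` leads for any monomial order refining total degree.
A point `P ∈ X` is a common zero iff for every `i` some `j` with `α_i j = 1` has `P_j = a_j`.
Labelling each `A_j` by `{0, …, n_j - 1}` with `a_j ↦ 0` identifies `X` with `B_X`, and turns
this condition into "`x^{α_i}` does not divide the label of `P` for any `i`", i.e. membership in
the footprint `Δ_X({α_1, …, α_r})`.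
-/

open MvPolynomial

section ShiftedMonomial

variable {R : Type*} [CommRing R] {m : ℕ}

noncomputable def shiftedMonomial (a : Fin m → R) (α : Fin m → ℕ) : MvPolynomial (Fin m) R :=
  ∏ j, (X j - C (a j)) ^ α j

lemma le_of_mem_support_shiftedMonomial [Nontrivial R] (a : Fin m → R) (α : Fin m → ℕ)
    {c : Fin m →₀ ℕ} (hc : c ∈ (shiftedMonomial a α).support) (j : Fin m) :
    c j ≤ α j := by
  classical
  have hfactor : ∀ k,
      degreeOf j (X k - C (a k) : MvPolynomial (Fin m) R) ≤ if j = k then 1 else 0 := fun k => by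
    simpa [degreeOf_X, degreeOf_C] using degreeOf_sub_le j (X k) (C (a k))
  calc c j ≤ degreeOf j (shiftedMonomial a α) := monomial_le_degreeOf j hc
    _ ≤ ∑ k, degreeOf j ((X k - C (a k) : MvPolynomial (Fin m) R) ^ α k) :=
      degreeOf_prod_le _ _ _
    _ ≤ ∑ k, α k * if j = k then 1 else 0 := Finset.sum_le_sum fun k _ =>
      (degreeOf_pow_le _ _ _).trans (Nat.mul_le_mul_left _ (hfactor k))
    _ = α j := by simp

lemma coeff_shiftedMonomial_self [Nontrivial R] (a : Fin m → R) (α : Fin m → ℕ) :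
    coeff (Finsupp.equivFunOnFinite.symm α) (shiftedMonomial a α) = 1 := by
  let ord : MonomialOrder (Fin m) := MonomialOrder.degLex
  have hmonic : ∀ j, ord.Monic ((X j - C (a j) : MvPolynomial (Fin m) R) ^ α j) :=
    fun j => (ord.monic_X_sub_C j (a j)).pow
  have hdeg : ord.degree (shiftedMonomial a α) = Finsupp.equivFunOnFinite.symm α := by
    rw [shiftedMonomial, ord.degree_prod_of_regular fun j _ => by
      rw [(hmonic j).leadingCoeff_eq_one]; exact isRegular_one,
      Finsupp.equivFunOnFinite_symm_eq_sum]
    refine Finset.sum_congr rfl fun j _ => ?_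
    rw [ord.degree_pow_of_pow_leadingCoeff_ne_zero (by simp [ord.monic_X_sub_C]),
      ord.degree_X_sub_C, Finsupp.smul_single, smul_eq_mul, mul_one]
  rw [← hdeg]
  exact (MonomialOrder.Monic.prod fun j _ => hmonic j).coeff_degree

lemma eval_shiftedMonomial_eq_zero_iff [IsDomain R] (a : Fin m → R) (α : Fin m → ℕ)
    (P : Fin m → R) : eval P (shiftedMonomial a α) = 0 ↔ ∃ j, α j ≠ 0 ∧ P j = a j := by
  simp [shiftedMonomial, Finset.prod_eq_zero_iff, sub_eq_zero, and_comm]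

end ShiftedMonomial

lemma mem_span_monomial_image_iff {R σ : Type*} [CommSemiring R] [Finite σ] {S : Set (σ → ℕ)}
    {p : MvPolynomial σ R} :
    p ∈ Submodule.span R
        ((fun a : σ → ℕ => monomial (Finsupp.equivFunOnFinite.symm a) (1 : R)) '' S) ↔
      ∀ c ∈ p.support, ⇑c ∈ S := by
  rw [← Set.image_image (monomial · 1) Finsupp.equivFunOnFinite.symm,
    ← restrictSupport_eq_span, mem_restrictSupport_iff]
  refine ⟨fun h c hc => ?_, fun h c hc => ⟨c, h c hc, by simp⟩⟩
  obtain ⟨b, hb, rfl⟩ := h hc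
  simpa using hb

lemma isLeadingExp_shiftedMonomial {F : Type*} [Field F] {m : ℕ} (a : Fin m → F)
    (α : Fin m → ℕ) : IsLeadingExp (shiftedMonomial a α) α := by
  refine ⟨by simp [coeff_shiftedMonomial_self], fun c hc hne => Or.inl ?_⟩
  have hle := le_of_mem_support_shiftedMonomial a α hc
  obtain ⟨j, hj⟩ := Function.ne_iff.mp hne
  exact Finset.sum_lt_sum (fun j _ => hle j) ⟨j, Finset.mem_univ j, (hle j).lt_of_ne hj⟩

lemma shiftedMonomial_mem_span_Sle {R : Type*} [CommRing R] [Nontrivial R] {m d : ℕ}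
    (a : Fin m → R) {α : Fin m → ℕ} (hα : α ∈ Sle m d) :
    shiftedMonomial a α ∈ Submodule.span R
      ((fun b : Fin m → ℕ => monomial (Finsupp.equivFunOnFinite.symm b) 1) '' Sle m d) := by
  refine mem_span_monomial_image_iff.mpr fun c hc => ?_
  have hle := le_of_mem_support_shiftedMonomial a α hc
  exact ⟨fun j => (hle j).trans (hα.1 j),
    (Finset.sum_le_sum fun j _ => hle j).trans hα.2⟩

open Classical in
lemma deltaX_eq_filter_of_squarefree {F : Type*} {m : ℕ} (A : Fin m → Finset F)
    {N : Set (Fin m → ℕ)} (hN : ∀ a ∈ N, ∀ j, a j ≤ 1) :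
    deltaX A N = (BX A).filter (fun β => ∀ a ∈ N, ∃ j, a j ≠ 0 ∧ β j = 0) := by
  refine Finset.filter_congr fun β _ => ?_
  push Not
  refine forall₂_congr fun a ha => exists_congr fun j => ?_
  have := hN a ha j
  omega

lemma Finset.exists_equiv_lt_card_eq_zero_iff {α : Type*} [Nonempty α] (s : Finset α) :
    ∃ a : α, ∃ e : s ≃ {k : ℕ // k < s.card}, ∀ x, (e x : ℕ) = 0 ↔ (x : α) = a := by
  let e : s ≃ {k : ℕ // k < s.card} := s.equivFin.trans Fin.equivSubtype
  by_cases hs : 0 < s.card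
  · refine ⟨e.symm ⟨0, hs⟩, e, fun x => ?_⟩
    rw [← Subtype.ext_iff, Equiv.eq_symm_apply, Subtype.ext_iff]
  · exact ⟨Classical.arbitrary α, e, fun x => absurd (e x).2 (by omega)⟩

lemma exists_equiv_BX {α : Type*} [Nonempty α] {m : ℕ} (A : Fin m → Finset α) :
    ∃ a : Fin m → α, ∃ φ : {P : Fin m → α // ∀ i, P i ∈ A i} ≃ BX A,
      ∀ P j, (φ P : Fin m → ℕ) j = 0 ↔ P.1 j = a j := by
  choose a e he using fun j => (A j).exists_equiv_lt_card_eq_zero_iff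
  refine ⟨a, Equiv.subtypePiEquivPi.trans ((Equiv.piCongrRight e).trans
    (Equiv.subtypePiEquivPi.symm.trans (Equiv.subtypeEquivRight fun β => ?_))), fun P j => ?_⟩
  · simp [BX]
  · exact he j ⟨P.1 j, P.2 j⟩

lemma Finset.card_filter_univ_eq_card_filter_of_equiv {α β : Type*} [Fintype α]
    (s : Finset β) (e : α ≃ s) {p : α → Prop} [DecidablePred p] {q : β → Prop}
    [DecidablePred q] (h : ∀ x, p x ↔ q (e x)) :
    (Finset.univ.filter p).card = (s.filter q).card := by
  refine Finset.card_bij (fun x _ => (e x : β)) (fun x hx => ?_) (fun x _ y _ hxy => ?_)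
    (fun b hb => ?_)
  · simp only [Finset.mem_filter, Finset.mem_univ, true_and] at hx ⊢
    exact ⟨(e x).2, (h x).1 hx⟩
  · exact e.injective (Subtype.ext hxy)
  · rw [Finset.mem_filter] at hb
    exact ⟨e.symm ⟨b, hb.1⟩, by simp [h, hb.2], by simp⟩

theorem exists_polys_with_leading_monomials_and_footprint_zeros_general
    {F : Type*} [Field F] [Fintype F] [DecidableEq F] {m d r : ℕ}
    (A : Fin m → Finset F)
    (α : Fin r → (Fin m → ℕ))
    (hα : ∀ i, α i ∈ Sle m d) :
    ∃ f : Fin r → MvPolynomial (Fin m) F,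
      (∀ i, f i ∈ Submodule.span F
        ((fun a : Fin m → ℕ =>
          MvPolynomial.monomial (Finsupp.equivFunOnFinite.symm a) (1 : F)) '' Sle m d)) ∧
      (∀ i, IsLeadingExp (f i) (α i)) ∧
      (Finset.univ.filter (fun P : {P : Fin m → F // ∀ i, P i ∈ A i} =>
          ∀ i, MvPolynomial.eval P.1 (f i) = 0)).card
        = (deltaX A (Set.range α)).card := by
  classical
  obtain ⟨a, φ, hφ⟩ := exists_equiv_BX A
  refine ⟨fun i => shiftedMonomial a (α i), fun i => shiftedMonomial_mem_span_Sle a (hα i),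
    fun i => isLeadingExp_shiftedMonomial a (α i), ?_⟩
  rw [deltaX_eq_filter_of_squarefree A (Set.forall_mem_range.mpr fun i => (hα i).1)]
  refine Finset.card_filter_univ_eq_card_filter_of_equiv _ φ fun P => ?_
  simp only [eval_shiftedMonomial_eq_zero_iff, hφ, Set.forall_mem_range]

/-- Let `X = A_1 × ⋯ × A_m` be a Cartesian set over `F_q`, `0 ≤ d ≤ m`,
`1 ≤ r ≤ Σ_{i=0}^{d} C(m,i)`, and let `α_1, …, α_r ∈ S_{≤d}(m)` be distinct. Then there
are polynomials `f_1, …, f_r` in the linear span of the square-free monomials of degree at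
most `d` whose leading monomials (w.r.t. degree-lexicographic order) are `x^{α_1}, …,
x^{α_r}` and whose number of common zeros in `X` equals `|Δ_X({α_1,…,α_r})|`. -/
theorem exists_polys_with_leading_monomials_and_footprint_zeros
    {F : Type*} [Field F] [Fintype F] [DecidableEq F] {m d r : ℕ}
    (A : Fin m → Finset F)
    (hcard : ∀ i, 2 ≤ (A i).card)
    (hmono : ∀ i j : Fin m, i ≤ j → (A i).card ≤ (A j).card)
    (hdm : d ≤ m) (hr1 : 1 ≤ r)
    (hr2 : r ≤ ∑ i ∈ Finset.range (d + 1), m.choose i)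
    (α : Fin r → (Fin m → ℕ)) (hαinj : Function.Injective α)
    (hα : ∀ i, α i ∈ Sle m d) :
    ∃ f : Fin r → MvPolynomial (Fin m) F,
      (∀ i, f i ∈ Submodule.span F
        ((fun a : Fin m → ℕ =>
          MvPolynomial.monomial (Finsupp.equivFunOnFinite.symm a) (1 : F)) '' Sle m d)) ∧
      (∀ i, IsLeadingExp (f i) (α i)) ∧
      (Finset.univ.filter (fun P : {P : Fin m → F // ∀ i, P i ∈ A i} =>
          ∀ i, MvPolynomial.eval P.1 (f i) = 0)).card
        = (deltaX A (Set.range α)).card :=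
  exists_polys_with_leading_monomials_and_footprint_zeros_general A α hα
end

section
/- (Monotonicity of generalized Hamming weights.) Let C ⊆ F_q^n be a linear code of dimension k > 0. Then 1 ≤ d_1(C) < d_2(C) < ⋯ < d_k(C) ≤ n. -/
/-! If `D ≤ C` realises `d_{r+1}(C)`, pick a coordinate `i` in the support of `D`. The subcode of
`D` of words vanishing at `i` has codimension at most one in `D`, hence contains an
`r`-dimensional subcode, and its support misses `i`; so `d_r(C) ≤ |supp D| - 1 < d_{r+1}(C)`. -/

open Module

namespace Submodule

variable {K V : Type*} [Field K] [AddCommGroup V] [Module K V]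

theorem exists_le_finrank_eq {D : Submodule K V} {r : ℕ} (hr : r ≤ finrank K D) :
    ∃ W ≤ D, finrank K W = r := by
  obtain ⟨f, hf⟩ := exists_linearIndependent_of_le_finrank (R := K) (M := D) hr
  have hind : LinearIndependent K (fun j => (f j : V)) := hf.map' D.subtype D.ker_subtype
  refine ⟨span K (Set.range fun j => (f j : V)), ?_, ?_⟩
  · rw [span_le]
    rintro _ ⟨j, rfl⟩
    exact (f j).2
  · rw [finrank_span_eq_card hind, Fintype.card_fin]

theorem finrank_le_finrank_inf_ker_add_one [FiniteDimensional K V] (W : Submodule K V)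
    (f : Dual K V) : finrank K W ≤ finrank K (W ⊓ LinearMap.ker f : Submodule K V) + 1 := by
  have hsup := finrank_sup_add_finrank_inf_eq W (LinearMap.ker f)
  have hrank := f.finrank_range_add_finrank_ker
  have hrange : finrank K (LinearMap.range f) ≤ 1 := by
    simpa using finrank_le (LinearMap.range f)
  have hle := finrank_le (W ⊔ LinearMap.ker f)
  omega

end Submodule

section GeneralizedHammingWeights

variable {F ι : Type*} [Field F] [Fintype ι]

theorem mem_codeSupp {C : Submodule F (ι → F)} {i : ι} :
    i ∈ codeSupp C ↔ ∃ c ∈ C, c i ≠ 0 := by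
  simp [codeSupp]

theorem codeSupp_mono {C D : Submodule F (ι → F)} (h : C ≤ D) : codeSupp C ⊆ codeSupp D :=
  fun _ hi => by
    obtain ⟨c, hc, hci⟩ := mem_codeSupp.1 hi
    exact mem_codeSupp.2 ⟨c, h hc, hci⟩

theorem codeSupp_nonempty {C : Submodule F (ι → F)} (hC : 0 < finrank F C) :
    (codeSupp C).Nonempty := by
  obtain ⟨c, hc, hc0⟩ := Submodule.exists_mem_ne_zero_of_ne_bot (Submodule.one_le_finrank_iff.1 hC)
  obtain ⟨i, hi⟩ := Function.ne_iff.1 hc0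
  exact ⟨i, mem_codeSupp.2 ⟨c, hc, hi⟩⟩

theorem codeSupp_inf_ker_proj_subset [DecidableEq ι] (C : Submodule F (ι → F)) (i : ι) :
    codeSupp (C ⊓ LinearMap.ker (LinearMap.proj i)) ⊆ (codeSupp C).erase i := by
  intro j hj
  obtain ⟨c, ⟨hcC, hci⟩, hcj⟩ := mem_codeSupp.1 hj
  refine Finset.mem_erase.2 ⟨?_, mem_codeSupp.2 ⟨c, hcC, hcj⟩⟩
  rintro rfl
  exact hcj hci

theorem GHW_le_card_codeSupp {C D : Submodule F (ι → F)} {r : ℕ} (hDC : D ≤ C)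
    (hr : r ≤ finrank F D) : GHW C r ≤ (codeSupp D).card := by
  obtain ⟨W, hWD, hW⟩ := Submodule.exists_le_finrank_eq hr
  calc GHW C r ≤ (codeSupp W).card := Nat.sInf_le ⟨W, hWD.trans hDC, hW, rfl⟩
    _ ≤ (codeSupp D).card := Finset.card_le_card (codeSupp_mono hWD)

theorem exists_card_codeSupp_eq_GHW {C : Submodule F (ι → F)} {r : ℕ} (hr : r ≤ finrank F C) :
    ∃ D ≤ C, finrank F D = r ∧ (codeSupp D).card = GHW C r := by
  obtain ⟨W, hWC, hW⟩ := Submodule.exists_le_finrank_eq hr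
  exact Nat.sInf_mem (⟨_, W, hWC, hW, rfl⟩ : Set.Nonempty
    {k | ∃ D : Submodule F (ι → F), D ≤ C ∧ finrank F D = r ∧ (codeSupp D).card = k})

theorem GHW_pos {C : Submodule F (ι → F)} {r : ℕ} (hr : 0 < r) (hrC : r ≤ finrank F C) :
    0 < GHW C r := by
  obtain ⟨D, -, hD, hDcard⟩ := exists_card_codeSupp_eq_GHW hrC
  rw [← hDcard]
  exact (codeSupp_nonempty (hD ▸ hr)).card_pos

theorem GHW_lt_GHW_succ {C : Submodule F (ι → F)} {r : ℕ} (hr : r < finrank F C) :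
    GHW C r < GHW C (r + 1) := by
  classical
  obtain ⟨D, hDC, hD, hDcard⟩ := exists_card_codeSupp_eq_GHW (Nat.succ_le_of_lt hr)
  obtain ⟨i, hi⟩ := codeSupp_nonempty (hD ▸ r.succ_pos)
  have hrank := D.finrank_le_finrank_inf_ker_add_one (LinearMap.proj i)
  calc GHW C r
      ≤ (codeSupp (D ⊓ LinearMap.ker (LinearMap.proj i))).card :=
        GHW_le_card_codeSupp (inf_le_left.trans hDC) (by omega)
    _ ≤ ((codeSupp D).erase i).card := Finset.card_le_card (codeSupp_inf_ker_proj_subset D i)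
    _ < (codeSupp D).card := Finset.card_erase_lt_of_mem hi
    _ = GHW C (r + 1) := hDcard

theorem GHW_finrank_le_card (C : Submodule F (ι → F)) :
    GHW C (finrank F C) ≤ Fintype.card ι :=
  (GHW_le_card_codeSupp le_rfl le_rfl).trans (Finset.card_le_univ _)

end GeneralizedHammingWeights

theorem ghw_strict_mono_general {F : Type*} [Field F] {n : ℕ}
    (C : Submodule F (Fin n → F)) (hk : 0 < Module.finrank F C) :
    1 ≤ GHW C 1 ∧
    (∀ r : ℕ, 1 ≤ r → r < Module.finrank F C → GHW C r < GHW C (r + 1)) ∧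
    GHW C (Module.finrank F C) ≤ n :=
  ⟨GHW_pos one_pos hk, fun _ _ hr => GHW_lt_GHW_succ hr,
    (GHW_finrank_le_card C).trans_eq (Fintype.card_fin n)⟩

/-- **Monotonicity.** For a linear code `C ⊆ F_q^n` of dimension `k > 0`,
`1 ≤ d_1(C) < d_2(C) < ⋯ < d_k(C) ≤ n`. -/
theorem ghw_strict_mono {F : Type*} [Field F] [Fintype F] {n : ℕ}
    (C : Submodule F (Fin n → F)) (hk : 0 < Module.finrank F C) :
    1 ≤ GHW C 1 ∧
    (∀ r : ℕ, 1 ≤ r → r < Module.finrank F C → GHW C r < GHW C (r + 1)) ∧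
    GHW C (Module.finrank F C) ≤ n :=
  ghw_strict_mono_general C hk
end
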